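/- arXiv:2107.05524 — 2 statements merged into one kernel-verified Lean document; each statement's English description precedes it below -/
import Mathlib

section
/- Fourier slice property of the quantum Radon transform: for any slope j ∈ [0,2N), the 1-D Fourier transform of QR_f(·,j) in the interception variable equals the 2-D Fourier transform of f̃ along the slice (i, i·j mod 2N): F₁{QR_f(·,j)}(i) = F₂{f̃}(i, i·j mod 2N) for all i ∈ [0,2N). -/
/-- The symmetrized extension `f̃` on `[0,2N)²`:
`f̃(x',y') = (1/2)(−1)^(⌊x'/N⌋+⌊y'/N⌋) f(x' mod N, y' mod N)`. -/
noncomputable def ftilde (N : ℕ) (f : ZMod N × ZMod N → ℂ) (x y : ℕ) : ℂ :=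
  (1 / 2) * (-1 : ℂ) ^ (x / N + y / N) * f (x, y)

/-- The quantum Radon transform
`QR_f(l,j) = (1/√(2N))·Σ_{(x',y') ∈ [0,2N)², x'+j·y' ≡ l mod 2N} f̃(x',y')`. -/
noncomputable def QRT (N : ℕ) (f : ZMod N × ZMod N → ℂ) (l j : ℕ) : ℂ :=
  (1 / (Real.sqrt (2 * N) : ℂ)) *
    ∑ x ∈ Finset.range (2 * N), ∑ y ∈ Finset.range (2 * N),
      if (x + j * y) % (2 * N) = l % (2 * N) then ftilde N f x y else 0

/-- 1-D discrete Fourier transform on `ℤ/(2N)ℤ`, normalized by `1/√(2N)`. -/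
noncomputable def dft1 (N : ℕ) (g : ℕ → ℂ) (i : ℕ) : ℂ :=
  (1 / (Real.sqrt (2 * N) : ℂ)) * ∑ l ∈ Finset.range (2 * N),
    g l * Complex.exp (-2 * Real.pi * Complex.I * (l * i) / (2 * N))

/-- 2-D discrete Fourier transform of `f̃` on `(ℤ/(2N)ℤ)²`, normalized by `1/(2N)`. -/
noncomputable def dft2tilde (N : ℕ) (f : ZMod N × ZMod N → ℂ) (u v : ℕ) : ℂ :=
  (1 / (2 * N : ℂ)) * ∑ x ∈ Finset.range (2 * N), ∑ y ∈ Finset.range (2 * N),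
    ftilde N f x y * Complex.exp (-2 * Real.pi * Complex.I * (u * x + v * y) / (2 * N))

lemma exp_congr_mod (M : ℕ) (hM : 0 < M) (D : ℂ) (hD : D = (M : ℂ)) {a b : ℕ}
    (h : a % M = b % M) :
    Complex.exp (-2 * Real.pi * Complex.I * a / D) =
      Complex.exp (-2 * Real.pi * Complex.I * b / D) := by
  subst hD
  have hMc : (M : ℂ) ≠ 0 := Nat.cast_ne_zero.mpr hM.ne'
  have key : ∀ c : ℕ, Complex.exp (-2 * Real.pi * Complex.I * c / M) =
      Complex.exp (-2 * Real.pi * Complex.I * (c % M : ℕ) / M) := by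
    intro c
    set q : ℕ := c / M with hq
    set r : ℕ := c % M with hr
    have hc : (c : ℂ) = M * q + r := by exact_mod_cast (Nat.div_add_mod c M).symm
    rw [hc]
    have h1 := Complex.exp_int_mul_two_pi_mul_I (-(q : ℤ))
    push_cast at h1
    have : -2 * (Real.pi : ℂ) * Complex.I * ((M : ℂ) * q + r) / M
        = -(q : ℂ) * (2 * Real.pi * Complex.I)
          + -2 * Real.pi * Complex.I * r / M := by
      field_simp
      ring
    rw [this, Complex.exp_add, h1, one_mul]
  rw [key a, key b, h]

lemma sum_pick (M a : ℕ) (hM : 0 < M) (g : ℕ → ℂ) :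
    ∑ l ∈ Finset.range M, (if a % M = l % M then g l else 0) = g (a % M) := by
  rw [Finset.sum_eq_single (a % M)]
  · rw [if_pos (Nat.mod_mod_of_dvd _ dvd_rfl).symm]
  · intro l hl hne
    rw [Nat.mod_eq_of_lt (Finset.mem_range.mp hl), if_neg (fun h => hne h.symm)]
  · intro h
    exact absurd (Finset.mem_range.mpr (Nat.mod_lt a hM)) h

set_option maxHeartbeats 1000000 in
/-- Fourier slice property of the quantum Radon transform: for any slope `j ∈ [0,2N)`,
`F₁{QR_f(·,j)}(i) = F₂{f̃}(i, i·j mod 2N)` for all `i ∈ [0,2N)`. -/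
theorem qrt_fourier_slice (N : ℕ) (hN : 0 < N) (f : ZMod N × ZMod N → ℂ)
    (i j : ℕ) (hi : i < 2 * N) (hj : j < 2 * N) :
    dft1 N (fun l => QRT N f l j) i = dft2tilde N f i ((i * j) % (2 * N)) := by
  have hM : 0 < 2 * N := by omega
  unfold dft1 QRT dft2tilde
  have hc : (1 / (Real.sqrt (2 * N) : ℂ)) * (1 / (Real.sqrt (2 * N) : ℂ))
      = 1 / (2 * N : ℂ) := by
    rw [div_mul_div_comm, one_mul, ← Complex.ofReal_mul,
      Real.mul_self_sqrt (by positivity)]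
    push_cast; ring
  have main :
      ∑ l ∈ Finset.range (2 * N),
        (∑ x ∈ Finset.range (2 * N), ∑ y ∈ Finset.range (2 * N),
          if (x + j * y) % (2 * N) = l % (2 * N) then ftilde N f x y else 0) *
          Complex.exp (-2 * Real.pi * Complex.I * (l * i) / (2 * N))
      = ∑ x ∈ Finset.range (2 * N), ∑ y ∈ Finset.range (2 * N),
          ftilde N f x y *
            Complex.exp (-2 * Real.pi * Complex.I *
              ((i : ℂ) * x + (((i * j) % (2 * N) : ℕ) : ℂ) * y) / (2 * N)) := by
    simp only [Finset.sum_mul, ite_mul, zero_mul]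
    rw [Finset.sum_comm]
    refine Finset.sum_congr rfl fun x hx => ?_
    rw [Finset.sum_comm]
    refine Finset.sum_congr rfl fun y hy => ?_
    rw [sum_pick (2 * N) (x + j * y) hM
      (fun l => ftilde N f x y * Complex.exp (-2 * Real.pi * Complex.I * (l * i) / (2 * N)))]
    · congr 1
      have cast1 : ((((x + j * y) % (2 * N) : ℕ)) : ℂ) * (i : ℂ)
          = ((((x + j * y) % (2 * N)) * i : ℕ) : ℂ) := by push_cast; ring
      have cast2 : ((i : ℂ) * x + (((i * j) % (2 * N) : ℕ) : ℂ) * y)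
          = (((i * x + ((i * j) % (2 * N)) * y : ℕ)) : ℂ) := by push_cast; ring
      rw [cast1, cast2]
      apply exp_congr_mod (2 * N) hM _ (by push_cast; ring)
      have h1 : ((x + j * y) % (2 * N) * i) ≡ (x + j * y) * i [MOD 2 * N] :=
        (Nat.mod_modEq _ _).mul_right i
      have h2 : (i * x + ((i * j) % (2 * N)) * y) ≡ i * x + (i * j) * y [MOD 2 * N] :=
        Nat.ModEq.add_left _ ((Nat.mod_modEq _ _).mul_right y)
      have h3 : (x + j * y) * i = i * x + (i * j) * y := by ring
      exact (h1.trans (h3 ▸ Nat.ModEq.refl _)).trans h2.symm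
  have step : (∑ l ∈ Finset.range (2 * N),
      ((1 / (Real.sqrt (2 * N) : ℂ)) *
        ∑ x ∈ Finset.range (2 * N), ∑ y ∈ Finset.range (2 * N),
          if (x + j * y) % (2 * N) = l % (2 * N) then ftilde N f x y else 0) *
        Complex.exp (-2 * Real.pi * Complex.I * (l * i) / (2 * N)))
      = (1 / (Real.sqrt (2 * N) : ℂ)) *
        ∑ l ∈ Finset.range (2 * N),
          (∑ x ∈ Finset.range (2 * N), ∑ y ∈ Finset.range (2 * N),
            if (x + j * y) % (2 * N) = l % (2 * N) then ftilde N f x y else 0) *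
            Complex.exp (-2 * Real.pi * Complex.I * (l * i) / (2 * N)) := by
    rw [Finset.mul_sum]
    exact Finset.sum_congr rfl fun l _ => by ring
  rw [step, ← mul_assoc, hc, main]
end

section
/- The 2-D Fourier transform of the symmetrized extension f̃ vanishes at frequencies not both odd: F₂{f̃}(i,j) = 0 whenever i or j is even, and F₂{f̃}(2i+1, 2j+1) = F₂{g}(i,j) for i,j ∈ [0,N), where g(x,y) = f(x,y)·e^(−2πI(x+y)/(2N)). -/
/-- 2-D discrete Fourier transform on `(ℤ/Nℤ)²`, normalized by `1/N`. -/
noncomputable def dft2 (N : ℕ) (g : ℕ → ℕ → ℂ) (u v : ℕ) : ℂ :=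
  (1 / (N : ℂ)) * ∑ x ∈ Finset.range N, ∑ y ∈ Finset.range N,
    g x y * Complex.exp (-2 * Real.pi * Complex.I * (u * x + v * y) / N)

lemma exp_neg_pi_I' : Complex.exp (-(Real.pi * Complex.I)) = -1 := by
  rw [Complex.exp_neg, Complex.exp_pi_mul_I]
  norm_num

lemma exp_shift_left (N : ℕ) (hN : 0 < N) (u v x y : ℕ) :
    Complex.exp (-2 * Real.pi * Complex.I * ((u : ℂ) * ((N : ℕ) + x : ℕ) + v * y) / (2 * N)) =
      (-1) ^ u * Complex.exp (-2 * Real.pi * Complex.I * ((u : ℂ) * x + v * y) / (2 * N)) := by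
  have hN' : (N : ℂ) ≠ 0 := Nat.cast_ne_zero.mpr hN.ne'
  have h : (-2 * (Real.pi : ℂ) * Complex.I * ((u : ℂ) * ((N : ℕ) + x : ℕ) + v * y) / (2 * N))
      = (u : ℂ) * -(Real.pi * Complex.I)
        + (-2 * Real.pi * Complex.I * ((u : ℂ) * x + v * y) / (2 * N)) := by
    push_cast
    field_simp
    ring
  rw [h, Complex.exp_add, Complex.exp_nat_mul, exp_neg_pi_I']

lemma exp_shift_right (N : ℕ) (hN : 0 < N) (u v x y : ℕ) :
    Complex.exp (-2 * Real.pi * Complex.I * ((u : ℂ) * x + v * ((N : ℕ) + y : ℕ)) / (2 * N)) =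
      (-1) ^ v * Complex.exp (-2 * Real.pi * Complex.I * ((u : ℂ) * x + v * y) / (2 * N)) := by
  have hN' : (N : ℂ) ≠ 0 := Nat.cast_ne_zero.mpr hN.ne'
  have h : (-2 * (Real.pi : ℂ) * Complex.I * ((u : ℂ) * x + v * ((N : ℕ) + y : ℕ)) / (2 * N))
      = (v : ℂ) * -(Real.pi * Complex.I)
        + (-2 * Real.pi * Complex.I * ((u : ℂ) * x + v * y) / (2 * N)) := by
    push_cast
    field_simp
    ring
  rw [h, Complex.exp_add, Complex.exp_nat_mul, exp_neg_pi_I']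

lemma exp_shift_both (N : ℕ) (hN : 0 < N) (u v x y : ℕ) :
    Complex.exp (-2 * Real.pi * Complex.I * ((u : ℂ) * ((N : ℕ) + x : ℕ) + v * ((N : ℕ) + y : ℕ)) / (2 * N)) =
      (-1) ^ u * ((-1) ^ v *
        Complex.exp (-2 * Real.pi * Complex.I * ((u : ℂ) * x + v * y) / (2 * N))) := by
  rw [exp_shift_left N hN u v x (N + y), exp_shift_right N hN u v x y]

lemma cast_shift (N x : ℕ) : ((N + x : ℕ) : ZMod N) = (x : ZMod N) := by
  push_cast
  simp

lemma four_term (N : ℕ) (hN : 0 < N) (f : ZMod N × ZMod N → ℂ) (u v x y : ℕ)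
    (hx : x < N) (hy : y < N) :
    (ftilde N f x y * Complex.exp (-2 * Real.pi * Complex.I * ((u : ℂ) * x + v * y) / (2 * N))
      + ftilde N f x (N + y) * Complex.exp (-2 * Real.pi * Complex.I * ((u : ℂ) * x + v * ((N : ℕ) + y : ℕ)) / (2 * N)))
    + (ftilde N f (N + x) y * Complex.exp (-2 * Real.pi * Complex.I * ((u : ℂ) * ((N : ℕ) + x : ℕ) + v * y) / (2 * N))
      + ftilde N f (N + x) (N + y) * Complex.exp (-2 * Real.pi * Complex.I * ((u : ℂ) * ((N : ℕ) + x : ℕ) + v * ((N : ℕ) + y : ℕ)) / (2 * N)))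
    = (1 / 2) * (1 - (-1 : ℂ) ^ u) * (1 - (-1 : ℂ) ^ v) *
        (f ((x : ZMod N), (y : ZMod N)) *
          Complex.exp (-2 * Real.pi * Complex.I * ((u : ℂ) * x + v * y) / (2 * N))) := by
  rw [exp_shift_left N hN u v x y, exp_shift_right N hN u v x y, exp_shift_both N hN u v x y]
  simp only [ftilde, Nat.div_eq_of_lt hx, Nat.div_eq_of_lt hy, Nat.add_div_left _ hN,
    cast_shift]
  ring

lemma sum_split (N : ℕ) (h : ℕ → ℂ) :
    ∑ x ∈ Finset.range (2 * N), h x = ∑ x ∈ Finset.range N, (h x + h (N + x)) := by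
  rw [two_mul, Finset.sum_range_add, Finset.sum_add_distrib]

lemma dft2tilde_eq (N : ℕ) (hN : 0 < N) (f : ZMod N × ZMod N → ℂ) (u v : ℕ) :
    dft2tilde N f u v =
      (1 / (2 * N : ℂ)) * ((1 / 2) * (1 - (-1 : ℂ) ^ u) * (1 - (-1 : ℂ) ^ v) *
        ∑ x ∈ Finset.range N, ∑ y ∈ Finset.range N,
          f ((x : ZMod N), (y : ZMod N)) *
            Complex.exp (-2 * Real.pi * Complex.I * ((u : ℂ) * x + v * y) / (2 * N))) := by
  unfold dft2tilde
  rw [sum_split]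
  congr 1
  rw [Finset.mul_sum]
  refine Finset.sum_congr rfl fun x hx => ?_
  rw [sum_split N (fun y => ftilde N f x y * _), sum_split N (fun y => ftilde N f (N + x) y * _),
    ← Finset.sum_add_distrib, Finset.mul_sum]
  refine Finset.sum_congr rfl fun y hy => ?_
  rw [four_term N hN f u v x y (Finset.mem_range.mp hx) (Finset.mem_range.mp hy)]

/-- main -/
theorem dft2tilde_supported_on_odd (N : ℕ) (hN : 0 < N) (f : ZMod N × ZMod N → ℂ) :
    (∀ i j : ℕ, i < 2 * N → j < 2 * N → (Even i ∨ Even j) → dft2tilde N f i j = 0) ∧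
    (∀ i j : ℕ, i < N → j < N →
      dft2tilde N f (2 * i + 1) (2 * j + 1) =
        dft2 N (fun x y => f (x, y) *
          Complex.exp (-2 * Real.pi * Complex.I * (x + y) / (2 * N))) i j) := by
  have hN' : (N : ℂ) ≠ 0 := Nat.cast_ne_zero.mpr hN.ne'
  constructor
  · intro i j _ _ hev
    rw [dft2tilde_eq N hN f i j]
    rcases hev with h | h
    · rw [h.neg_one_pow]
      ring
    · rw [h.neg_one_pow]
      ring
  · intro i j hi hj
    rw [dft2tilde_eq N hN f (2 * i + 1) (2 * j + 1)]
    have hodd : ∀ k : ℕ, (-1 : ℂ) ^ (2 * k + 1) = -1 := fun k => (Odd.neg_one_pow ⟨k, by ring⟩)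
    rw [hodd, hodd]
    unfold dft2
    simp only [Finset.mul_sum]
    refine Finset.sum_congr rfl fun x hx => Finset.sum_congr rfl fun y hy => ?_
    have hexp : Complex.exp (-2 * Real.pi * Complex.I * (((2 * i + 1 : ℕ) : ℂ) * x + ((2 * j + 1 : ℕ) : ℂ) * y) / (2 * N))
        = Complex.exp (-2 * Real.pi * Complex.I * ((x : ℂ) + y) / (2 * N)) *
          Complex.exp (-2 * Real.pi * Complex.I * ((i : ℂ) * x + j * y) / N) := by
      rw [← Complex.exp_add]
      congr 1
      push_cast
      field_simp
      ring
    rw [hexp]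
    field_simp
    ring
end
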